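/- arXiv:2004.04021 — 2 statements merged into one kernel-verified Lean document; each statement's English description precedes it below -/
import Mathlib

section
/- Let n ≥ 1 and let F : Matrix (Fin n) (Fin n) ℝ → ℝ be a polynomial function of the matrix entries (i.e. there is a multivariate polynomial P over ℝ in the n² entry-variables with F(A) = P evaluated at the entries of A for every A). Suppose F is invariant under orthogonal conjugation on symmetric matrices: F(Bᵀ A B) = F(A) for every symmetric matrix A (Aᵀ = A) and every orthogonal matrix B (Bᵀ B = 1). Then there exists a multivariate polynomial Q over ℝ in n variables such that for every symmetric matrix A one has F(A) = Q(tr(A), tr(A²), …, tr(Aⁿ)). -/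
/-!
Restricting `P` to diagonal matrices gives a polynomial `G` in `n` variables with
`G x = F (diagonal x)`; it is symmetric because permutation matrices are orthogonal. In
characteristic zero, Newton's identities make every symmetric polynomial in `n` variables a
polynomial `Q` in the power sums `p₁, …, pₙ`. A symmetric `A` is orthogonally conjugate to the
diagonal matrix of its eigenvalues `λ`, and conjugation preserves the traces of powers, so
`F A = G λ = Q (p₁ λ, …, pₙ λ) = Q (tr A, …, tr Aⁿ)`.
-/

open Matrix

namespace MvPolynomial

section Evaluation

variable {σ τ R : Type*} [CommRing R]

theorem eval_aeval (x : τ → R) (g : σ → MvPolynomial τ R) (p : MvPolynomial σ R) :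
    eval x (aeval g p) = eval (fun i => eval x (g i)) p :=
  aeval_bind₁ x g p

theorem eval_aeval_diagonal_X [DecidableEq σ] (P : MvPolynomial (σ × σ) R) (x : σ → R) :
    eval x (aeval (fun p : σ × σ => diagonal X p.1 p.2) P) =
      eval (fun p : σ × σ => diagonal x p.1 p.2) P := by
  rw [eval_aeval]
  congr 2 with p
  by_cases h : p.1 = p.2 <;> simp [h]

theorem eval_psum [Fintype σ] (x : σ → R) (k : ℕ) :
    eval x (psum σ R k) = ∑ i, x i ^ k := by
  simp [psum]

theorem isSymmetric_of_forall_eval_comp [IsDomain R] [Infinite R] {p : MvPolynomial σ R}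
    (h : ∀ (e : Equiv.Perm σ) (x : σ → R), eval (x ∘ e) p = eval x p) : p.IsSymmetric :=
  fun e => MvPolynomial.funext fun x => by rw [eval_rename, h]

end Evaluation

section PowerSums

variable {σ R : Type*} [Fintype σ] [Field R] [CharZero R] {n : ℕ}

theorem esymm_mem_range_aeval_psum {k : ℕ} (hk : k ≤ n) :
    esymm σ R k ∈ (aeval (R := R) fun i : Fin n => psum σ R (i + 1)).range := by
  set S := (aeval (R := R) fun i : Fin n => psum σ R (i + 1)).range
  induction k using Nat.strong_induction_on with
  | _ k ih =>
    obtain rfl | hk₀ := k.eq_zero_or_pos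
    · simp
    have hsign (m : ℕ) : ((-1) ^ m : MvPolynomial σ R) ∈ S := S.pow_mem (S.neg_mem S.one_mem) m
    have hpsum (j : ℕ) (hj : 0 < j) (hjn : j ≤ n) : psum σ R j ∈ S :=
      ⟨X ⟨j - 1, by omega⟩, by simp [Nat.sub_add_cancel hj]⟩
    have hk_inv : esymm σ R k = (k : R)⁻¹ • ((k : MvPolynomial σ R) * esymm σ R k) := by
      rw [← map_natCast (C : R →+* MvPolynomial σ R), ← smul_eq_C_mul, smul_smul,
        inv_mul_cancel₀ (Nat.cast_ne_zero.mpr hk₀.ne'), one_smul]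
    rw [hk_inv, mul_esymm_eq_sum]
    refine S.smul_mem (S.mul_mem (hsign _) (S.sum_mem fun a ha => ?_)) _
    rw [Finset.mem_filter, Finset.HasAntidiagonal.mem_antidiagonal] at ha
    exact S.mul_mem (S.mul_mem (hsign _) (ih a.1 ha.2 (by omega)))
      (hpsum a.2 (by omega) (by omega))

theorem IsSymmetric.exists_aeval_psum_eq {p : MvPolynomial σ R} (hp : p.IsSymmetric)
    (hn : Fintype.card σ ≤ n) :
    ∃ q : MvPolynomial (Fin n) R, aeval (fun i : Fin n => psum σ R (i + 1)) q = p := by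
  obtain ⟨q, hq⟩ := esymmAlgHom_surjective R hn ⟨p, hp⟩
  have hp_esymm : p ∈ (aeval (R := R) fun i : Fin n => esymm σ R (i + 1)).range :=
    ⟨q, by simpa [esymmAlgHom_apply] using congrArg Subtype.val hq⟩
  suffices p ∈ (aeval (R := R) fun i : Fin n => psum σ R (i + 1)).range from this
  rw [aeval_range] at hp_esymm ⊢
  refine Algebra.adjoin_le ?_ hp_esymm
  rintro _ ⟨i, rfl⟩
  rw [← aeval_range]
  exact esymm_mem_range_aeval_psum i.isLt

end PowerSums

end MvPolynomial

namespace Matrix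

variable {n R : Type*} [Fintype n] [DecidableEq n]

theorem transpose_permMatrix_mul_self [NonAssocSemiring R] (e : Equiv.Perm n) :
    (e.permMatrix R)ᵀ * e.permMatrix R = 1 := by
  rw [transpose_permMatrix, ← permMatrix_mul, mul_inv_cancel, permMatrix_one]

theorem transpose_permMatrix_mul_diagonal_mul_permMatrix [NonAssocSemiring R]
    (e : Equiv.Perm n) (x : n → R) :
    (e.permMatrix R)ᵀ * diagonal x * e.permMatrix R = diagonal (x ∘ ⇑e⁻¹) := by
  rw [transpose_permMatrix, PEquiv.toMatrix_toPEquiv_mul, PEquiv.mul_toMatrix_toPEquiv,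
    submatrix_submatrix, Function.id_comp, Function.comp_id]
  exact submatrix_diagonal_equiv x e⁻¹

theorem trace_pow_transpose_mul_mul [CommRing R] {B : Matrix n n R} (hB : Bᵀ * B = 1)
    (A : Matrix n n R) (k : ℕ) :
    trace ((Bᵀ * A * B) ^ k) = trace (A ^ k) := by
  have hB' : B * Bᵀ = 1 := mul_eq_one_comm.mp hB
  have hpow : (Bᵀ * A * B) ^ k = Bᵀ * A ^ k * B := by
    induction k with
    | zero => simp [hB]
    | succ k ih =>
      rw [pow_succ, ih, pow_succ]
      simp only [Matrix.mul_assoc, ← Matrix.mul_assoc B, hB', Matrix.one_mul]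
  rw [hpow, trace_mul_cycle, hB', Matrix.one_mul]

theorem IsHermitian.exists_transpose_mul_mul_eq_diagonal {A : Matrix n n ℝ}
    (hA : A.IsHermitian) :
    ∃ B : Matrix n n ℝ, Bᵀ * B = 1 ∧ Bᵀ * A * B = diagonal hA.eigenvalues := by
  refine ⟨hA.eigenvectorUnitary, ?_, ?_⟩
  · simpa [star_eq_conjTranspose] using Unitary.coe_star_mul_self hA.eigenvectorUnitary
  · simpa [Unitary.conjStarAlgAut_apply, star_eq_conjTranspose] using
      hA.conjStarAlgAut_star_eigenvectorUnitary

end Matrix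

open MvPolynomial in
theorem stmt_4_general (n : ℕ) (F : Matrix (Fin n) (Fin n) ℝ → ℝ)
    (P : MvPolynomial (Fin n × Fin n) ℝ)
    (hF : ∀ A : Matrix (Fin n) (Fin n) ℝ,
      F A = MvPolynomial.eval (fun p : Fin n × Fin n => A p.1 p.2) P)
    (hinv : ∀ A B : Matrix (Fin n) (Fin n) ℝ, Aᵀ = A → Bᵀ * B = 1 →
      F (Bᵀ * A * B) = F A) :
    ∃ Q : MvPolynomial (Fin n) ℝ, ∀ A : Matrix (Fin n) (Fin n) ℝ, Aᵀ = A →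
      F A = MvPolynomial.eval (fun i : Fin n => (A ^ ((i : ℕ) + 1)).trace) Q := by
  set G : MvPolynomial (Fin n) ℝ := aeval (fun p : Fin n × Fin n => diagonal X p.1 p.2) P
  have hG (x : Fin n → ℝ) : eval x G = F (diagonal x) := by
    rw [eval_aeval_diagonal_X, hF]
  have hG_symm : G.IsSymmetric := isSymmetric_of_forall_eval_comp fun e x => by
    rw [hG, hG, ← inv_inv e, ← transpose_permMatrix_mul_diagonal_mul_permMatrix]
    exact hinv _ _ (diagonal_transpose x) (transpose_permMatrix_mul_self _)
  obtain ⟨Q, hQ⟩ := hG_symm.exists_aeval_psum_eq (Fintype.card_fin n).le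
  refine ⟨Q, fun A hA => ?_⟩
  have hAh : A.IsHermitian := by rwa [IsHermitian, conjTranspose_eq_transpose_of_trivial]
  obtain ⟨B, hB, hBA⟩ := hAh.exists_transpose_mul_mul_eq_diagonal
  calc F A = F (Bᵀ * A * B) := (hinv A B hA hB).symm
    _ = eval (fun i : Fin n => eval hAh.eigenvalues (psum (Fin n) ℝ (i + 1))) Q := by
      rw [hBA, ← hG, ← hQ, eval_aeval]
    _ = eval (fun i : Fin n => (A ^ ((i : ℕ) + 1)).trace) Q := by
      simp_rw [eval_psum, ← trace_pow_transpose_mul_mul hB A, hBA, diagonal_pow,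
        trace_diagonal, Pi.pow_apply]

/-- a polynomial function of matrix entries invariant under orthogonal
conjugation on symmetric matrices is a polynomial in the traces of powers. -/
theorem stmt_4 (n : ℕ) (hn : 1 ≤ n) (F : Matrix (Fin n) (Fin n) ℝ → ℝ)
    (P : MvPolynomial (Fin n × Fin n) ℝ)
    (hF : ∀ A : Matrix (Fin n) (Fin n) ℝ,
      F A = MvPolynomial.eval (fun p : Fin n × Fin n => A p.1 p.2) P)
    (hinv : ∀ A B : Matrix (Fin n) (Fin n) ℝ, Aᵀ = A → Bᵀ * B = 1 →
      F (Bᵀ * A * B) = F A) :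
    ∃ Q : MvPolynomial (Fin n) ℝ, ∀ A : Matrix (Fin n) (Fin n) ℝ, Aᵀ = A →
      F A = MvPolynomial.eval (fun i : Fin n => (A ^ ((i : ℕ) + 1)).trace) Q :=
  stmt_4_general n F P hF hinv
end

section
/- Let n ≥ 0, let E = EuclideanSpace ℝ (Fin (n+1)), let W = ℝ × E × ℝ, and let Q be the quadratic form Q(λ, x, s) = 2λs + ‖x‖² on W. For any two nonzero vectors v, w ∈ W with Q(v) = 0 and Q(w) = 0, there exists a linear equivalence f : W ≃ W with Q(f(z)) = Q(z) for all z ∈ W and f(v) = w. (Hence the orthogonal group O(1, n+2) of the Minkowski form acts transitively on the nonzero isotropic vectors, and therefore on the projectivized light cone, the conformal sphere.) -/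
/-!
Every nonzero isotropic vector is the image of `p = (1, 0, 0)` under a composite of three kinds
of isometries of `Q(λ, x, s) = 2λs + ‖x‖²`: boosts `(λ, x, s) ↦ (tλ, x, s/t)`, the swap `λ ↔ s`,
and the null translations `(λ, x, s) ↦ (λ, x + λa, s - ⟪a, x⟫ - λ‖a‖²/2)`. If `v = (λ, x, s)` has `λ ≠ 0`, the
boost by `λ` followed by the null translation by `x/λ` sends `p` to `(λ, x, -‖x‖²/(2λ)) = v`. If
`λ = 0`, isotropy forces `x = 0`, so `v = (0, 0, s)` is the swap of `(s, 0, 0)`.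
-/

open scoped RealInnerProductSpace

/-- The Minkowski quadratic form `Q(λ, x, s) = 2λs + ‖x‖²` on `W = ℝ × E × ℝ`. -/
noncomputable def minkQ10 (n : ℕ) (w : ℝ × EuclideanSpace ℝ (Fin (n + 1)) × ℝ) : ℝ :=
  2 * w.1 * w.2.2 + ‖w.2.1‖ ^ 2

namespace Minkowski

variable {E : Type*} [NormedAddCommGroup E] [InnerProductSpace ℝ E]

noncomputable def form (w : ℝ × E × ℝ) : ℝ := 2 * w.1 * w.2.2 + ‖w.2.1‖ ^ 2

def PreservesForm (f : (ℝ × E × ℝ) ≃ₗ[ℝ] (ℝ × E × ℝ)) : Prop := ∀ z, form (f z) = form z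

namespace PreservesForm

variable {f g : (ℝ × E × ℝ) ≃ₗ[ℝ] (ℝ × E × ℝ)}

theorem symm (hf : PreservesForm f) : PreservesForm f.symm := fun z => by
  rw [← hf, f.apply_symm_apply]

theorem trans (hf : PreservesForm f) (hg : PreservesForm g) : PreservesForm (f.trans g) :=
  fun z => (hg _).trans (hf z)

end PreservesForm

noncomputable def nullTranslation (a : E) : (ℝ × E × ℝ) ≃ₗ[ℝ] (ℝ × E × ℝ) where
  toFun z := (z.1, z.2.1 + z.1 • a, z.2.2 - ⟪a, z.2.1⟫ - z.1 * (‖a‖ ^ 2 / 2))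
  invFun z := (z.1, z.2.1 - z.1 • a, z.2.2 + ⟪a, z.2.1⟫ - z.1 * (‖a‖ ^ 2 / 2))
  map_add' := fun ⟨l, u, s⟩ ⟨m, v, t⟩ => by
    simp only [Prod.mk_add_mk, inner_add_right, Prod.mk.injEq, true_and]
    exact ⟨by module, by ring⟩
  map_smul' := fun c ⟨l, u, s⟩ => by
    simp only [Prod.smul_mk, smul_eq_mul, real_inner_smul_right, RingHom.id_apply, Prod.mk.injEq,
      true_and]
    exact ⟨by module, by ring⟩
  left_inv := fun ⟨l, u, s⟩ => by
    simp only [inner_add_right, real_inner_smul_right, real_inner_self_eq_norm_sq, Prod.mk.injEq,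
      true_and]
    exact ⟨by module, by ring⟩
  right_inv := fun ⟨l, u, s⟩ => by
    simp only [inner_sub_right, real_inner_smul_right, real_inner_self_eq_norm_sq, Prod.mk.injEq,
      true_and]
    exact ⟨by module, by ring⟩

theorem nullTranslation_apply (a : E) (l : ℝ) (u : E) (s : ℝ) :
    nullTranslation a (l, u, s) = (l, u + l • a, s - ⟪a, u⟫ - l * (‖a‖ ^ 2 / 2)) := rfl

theorem preservesForm_nullTranslation (a : E) : PreservesForm (nullTranslation a) :=
  fun ⟨l, u, s⟩ => by
    simp only [form, nullTranslation_apply, norm_add_sq_real, real_inner_smul_right, norm_smul,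
      real_inner_comm u a, mul_pow, Real.norm_eq_abs, sq_abs]
    ring

noncomputable def boost {t : ℝ} (ht : t ≠ 0) : (ℝ × E × ℝ) ≃ₗ[ℝ] (ℝ × E × ℝ) :=
  (LinearEquiv.smulOfNeZero ℝ ℝ t ht).prodCongr
    ((LinearEquiv.refl ℝ E).prodCongr (LinearEquiv.smulOfNeZero ℝ ℝ t⁻¹ (inv_ne_zero ht)))

theorem boost_apply {t : ℝ} (ht : t ≠ 0) (l : ℝ) (u : E) (s : ℝ) :
    boost ht (l, u, s) = (t * l, u, t⁻¹ * s) := rfl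

theorem preservesForm_boost {t : ℝ} (ht : t ≠ 0) :
    PreservesForm (boost ht : (ℝ × E × ℝ) ≃ₗ[ℝ] _) :=
  fun ⟨l, u, s⟩ => by
    simp only [form, boost_apply]
    field_simp

def swap : (ℝ × E × ℝ) ≃ₗ[ℝ] (ℝ × E × ℝ) where
  toFun z := (z.2.2, z.2.1, z.1)
  invFun z := (z.2.2, z.2.1, z.1)
  map_add' _ _ := rfl
  map_smul' _ _ := rfl
  left_inv _ := rfl
  right_inv _ := rfl

theorem swap_apply (l : ℝ) (u : E) (s : ℝ) : swap (l, u, s) = (s, u, l) := rfl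

theorem preservesForm_swap : PreservesForm (swap : (ℝ × E × ℝ) ≃ₗ[ℝ] _) :=
  fun ⟨l, u, s⟩ => by
    simp only [form, swap_apply]
    ring

theorem exists_preservesForm_apply_eq_of_fst_ne_zero {l s : ℝ} {u : E} (hl : l ≠ 0)
    (h : form (l, u, s) = 0) :
    ∃ f : (ℝ × E × ℝ) ≃ₗ[ℝ] (ℝ × E × ℝ), PreservesForm f ∧ f (1, 0, 0) = (l, u, s) := by
  refine ⟨(boost hl).trans (nullTranslation (l⁻¹ • u)),
    (preservesForm_boost _).trans (preservesForm_nullTranslation _), ?_⟩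
  simp only [LinearEquiv.trans_apply, boost_apply, nullTranslation_apply, mul_one,
    mul_zero, inner_zero_right, smul_smul, mul_inv_cancel₀ hl, one_smul, zero_add, Prod.mk.injEq,
    true_and, norm_smul, mul_pow, Real.norm_eq_abs, sq_abs]
  simp only [form] at h
  field_simp
  linear_combination -h

theorem exists_preservesForm_apply_eq {v : ℝ × E × ℝ} (hv : v ≠ 0) (h : form v = 0) :
    ∃ f : (ℝ × E × ℝ) ≃ₗ[ℝ] (ℝ × E × ℝ), PreservesForm f ∧ f (1, 0, 0) = v := by
  obtain ⟨l, u, s⟩ := v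
  rcases ne_or_eq l 0 with hl | rfl
  · exact exists_preservesForm_apply_eq_of_fst_ne_zero hl h
  obtain rfl : u = 0 := by simpa [form] using h
  have hs : s ≠ 0 := by rintro rfl; exact hv rfl
  obtain ⟨f, hf, hf1⟩ := exists_preservesForm_apply_eq_of_fst_ne_zero (u := (0 : E)) (s := 0) hs
    (by simp [form])
  exact ⟨f.trans swap, hf.trans preservesForm_swap,
    by rw [LinearEquiv.trans_apply, hf1, swap_apply]⟩

end Minkowski

/-- the orthogonal group of the Minkowski form acts transitively on
nonzero isotropic vectors. -/
theorem stmt_10 (n : ℕ) (v w : ℝ × EuclideanSpace ℝ (Fin (n + 1)) × ℝ)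
    (hv : v ≠ 0) (hw : w ≠ 0) (hQv : minkQ10 n v = 0) (hQw : minkQ10 n w = 0) :
    ∃ f : (ℝ × EuclideanSpace ℝ (Fin (n + 1)) × ℝ) ≃ₗ[ℝ]
        (ℝ × EuclideanSpace ℝ (Fin (n + 1)) × ℝ),
      (∀ z : ℝ × EuclideanSpace ℝ (Fin (n + 1)) × ℝ, minkQ10 n (f z) = minkQ10 n z) ∧
      f v = w := by
  -- `minkQ10 n` is `Minkowski.form` unfolded, so the hypotheses apply as they stand.
  obtain ⟨f, hf, rfl⟩ := Minkowski.exists_preservesForm_apply_eq hv hQv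
  obtain ⟨g, hg, rfl⟩ := Minkowski.exists_preservesForm_apply_eq hw hQw
  exact ⟨f.symm.trans g, hf.symm.trans hg, by simp⟩
end
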